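/- Let X be a real Banach space and Y a closed subspace of X. If Y admits an equivalent norm under which Y has a Δ-point, then X admits an equivalent norm under which X has a Δ-point. The same statement holds with 'super Δ-point' in place of 'Δ-point'. -/

import Mathlib

open NormedSpace Topology Filter Pointwise

/-- `N` is an equivalent norm on the normed space `Z`. -/
def IsEquivNorm (Z : Type*) [NormedAddCommGroup Z] [NormedSpace ℝ Z] (N : Z → ℝ) : Prop :=
  (∀ z w : Z, N (z + w) ≤ N z + N w) ∧ (∀ (a : ℝ) (z : Z), N (a • z) = |a| * N z) ∧
  (∃ c C : ℝ, 0 < c ∧ 0 < C ∧ ∀ z : Z, c * ‖z‖ ≤ N z ∧ N z ≤ C * ‖z‖)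

/-- The norm `N` on `Z` admits a Δ-point. -/
def HasDeltaPointForNorm (Z : Type*) [NormedAddCommGroup Z] [NormedSpace ℝ Z]
    (N : Z → ℝ) : Prop :=
  ∃ z₀ : Z, N z₀ = 1 ∧ ∀ f : Z →L[ℝ] ℝ, sSup (f '' {y : Z | N y ≤ 1}) = 1 →
    ∀ ε : ℝ, 0 < ε → 1 - ε < f z₀ →
      sSup ((fun y => N (z₀ - y)) '' {y : Z | N y ≤ 1 ∧ 1 - ε < f y}) = 2

/-- The norm `N` on `Z` admits a super Δ-point (with respect to the weak topology of `Z`,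
which is unchanged under equivalent renormings). -/
def HasSuperDeltaPointForNorm (Z : Type*) [NormedAddCommGroup Z] [NormedSpace ℝ Z]
    (N : Z → ℝ) : Prop :=
  ∃ z₀ : Z, N z₀ = 1 ∧ ∀ U : Set Z, IsOpen (toWeakSpace ℝ Z '' U) → z₀ ∈ U →
    sSup ((fun y => N (z₀ - y)) '' ({y : Z | N y ≤ 1} ∩ U)) = 2

lemma le_of_all_pos_add {a b : ℝ} (h : ∀ ε > 0, a ≤ b + ε) : a ≤ b := by
  by_contra h'
  push_neg at h'
  have := h ((a - b) / 2) (by linarith)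
  linarith

lemma sSup_eq_two_of_subset {S T : Set ℝ} (hST : S ⊆ T) (hS : sSup S = 2)
    (hT : ∀ r ∈ T, r ≤ 2) : sSup T = 2 := by
  have hSne : S.Nonempty := by
    rcases S.eq_empty_or_nonempty with h | h
    · rw [h, Real.sSup_empty] at hS; norm_num at hS
    · exact h
  have hTbdd : BddAbove T := ⟨2, hT⟩
  exact le_antisymm (csSup_le (hSne.mono hST) hT)
    (hS ▸ csSup_le_csSup hTbdd hSne hST)

/-- Extension of an equivalent norm from a subspace to the whole space by
inf-convolution. -/
lemma extend_equiv_norm {X : Type*} [NormedAddCommGroup X] [NormedSpace ℝ X]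
    (Y : Submodule ℝ X) (N : Y → ℝ) (hN : IsEquivNorm Y N) :
    ∃ N' : X → ℝ, IsEquivNorm X N' ∧ ∀ y : Y, N' (y : X) = N y := by
  obtain ⟨hadd, hsmul, c, C, hc, hC, hb⟩ := hN
  have hN0 : N 0 = 0 := by simpa using hsmul 0 0
  set F : X → Y → ℝ := fun x y => N y + C * ‖x - (y : X)‖ with hF
  set m := min c C with hm
  have hm0 : 0 < m := lt_min hc hC
  have hlow : ∀ (x : X) (y : Y), m * ‖x‖ ≤ F x y := by
    intro x y
    have h1 : c * ‖y‖ ≤ N y := (hb y).1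
    have hyn : ‖y‖ = ‖(y : X)‖ := rfl
    have h2 : ‖x‖ ≤ ‖(y : X)‖ + ‖x - (y : X)‖ := by
      calc ‖x‖ = ‖(y : X) + (x - (y : X))‖ := by rw [add_sub_cancel]
        _ ≤ ‖(y : X)‖ + ‖x - (y : X)‖ := norm_add_le _ _
    have h3 : m * ‖(y : X)‖ ≤ N y := le_trans
      (mul_le_mul_of_nonneg_right (min_le_left c C) (norm_nonneg _)) (hyn ▸ h1)
    have h4 : m * ‖x - (y : X)‖ ≤ C * ‖x - (y : X)‖ :=
      mul_le_mul_of_nonneg_right (min_le_right c C) (norm_nonneg _)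
    calc m * ‖x‖ ≤ m * (‖(y : X)‖ + ‖x - (y : X)‖) :=
          mul_le_mul_of_nonneg_left h2 hm0.le
      _ = m * ‖(y : X)‖ + m * ‖x - (y : X)‖ := by ring
      _ ≤ N y + C * ‖x - (y : X)‖ := add_le_add h3 h4
  set N' : X → ℝ := fun x => sInf (Set.range (F x)) with hN'
  have hne : ∀ x : X, (Set.range (F x)).Nonempty := fun x => ⟨F x 0, 0, rfl⟩
  have hbdd : ∀ x : X, BddBelow (Set.range (F x)) := by
    intro x
    exact ⟨m * ‖x‖, by rintro r ⟨y, rfl⟩; exact hlow x y⟩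
  have hlow' : ∀ x : X, m * ‖x‖ ≤ N' x := by
    intro x
    exact le_csInf (hne x) (by rintro r ⟨y, rfl⟩; exact hlow x y)
  have hres : ∀ y : Y, N' (y : X) = N y := by
    intro y
    refine le_antisymm ?_ ?_
    · have : F (y : X) y = N y := by simp [hF]
      exact this ▸ csInf_le (hbdd _) ⟨y, rfl⟩
    · refine le_csInf (hne _) ?_
      rintro r ⟨y', rfl⟩
      have h1 : N y ≤ N y' + N (y - y') := by
        have := hadd y' (y - y'); simpa using this
      have h2 : N (y - y') ≤ C * ‖(y : X) - (y' : X)‖ := by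
        have := (hb (y - y')).2
        simpa using this
      calc N y ≤ N y' + N (y - y') := h1
        _ ≤ N y' + C * ‖(y : X) - (y' : X)‖ := by linarith
  refine ⟨N', ⟨?_, ?_, m, C, hm0, hC, fun x => ⟨hlow' x, ?_⟩⟩, hres⟩
  · -- subadditivity
    intro x w
    refine le_of_all_pos_add ?_
    intro ε hε
    obtain ⟨r₁, ⟨y₁, rfl⟩, hr₁⟩ := Real.lt_sInf_add_pos (hne x) (half_pos hε)
    obtain ⟨r₂, ⟨y₂, rfl⟩, hr₂⟩ := Real.lt_sInf_add_pos (hne w) (half_pos hε)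
    have hr₁' : F x y₁ < N' x + ε / 2 := hr₁
    have hr₂' : F w y₂ < N' w + ε / 2 := hr₂
    have key : F (x + w) (y₁ + y₂) ≤ F x y₁ + F w y₂ := by
      have h1 : N (y₁ + y₂) ≤ N y₁ + N y₂ := hadd y₁ y₂
      have h2 : ‖x + w - ((y₁ + y₂ : Y) : X)‖ ≤ ‖x - (y₁ : X)‖ + ‖w - (y₂ : X)‖ := by
        have : x + w - ((y₁ + y₂ : Y) : X) = (x - y₁) + (w - y₂) := by
          push_cast; abel
        rw [this]; exact norm_add_le _ _
      have h3 : C * ‖x + w - ((y₁ + y₂ : Y) : X)‖ ≤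
          C * (‖x - (y₁ : X)‖ + ‖w - (y₂ : X)‖) :=
        mul_le_mul_of_nonneg_left h2 hC.le
      simp only [hF]; nlinarith
    have hmem : N' (x + w) ≤ F (x + w) (y₁ + y₂) := csInf_le (hbdd _) ⟨y₁ + y₂, rfl⟩
    calc N' (x + w) ≤ F (x + w) (y₁ + y₂) := hmem
      _ ≤ F x y₁ + F w y₂ := key
      _ ≤ N' x + ε / 2 + (N' w + ε / 2) := le_of_lt (add_lt_add hr₁' hr₂')
      _ = N' x + N' w + ε := by ring
  · -- homogeneity
    intro a x
    rcases eq_or_ne a 0 with rfl | ha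
    · have h0 : N' 0 = 0 := by
        refine le_antisymm ?_ ?_
        · have : F (0 : X) 0 = 0 := by simp [hF, hN0]
          exact this ▸ csInf_le (hbdd _) ⟨0, rfl⟩
        · have := hlow' 0; simpa using this
      simpa using h0
    · have hset : Set.range (F (a • x)) = |a| • Set.range (F x) := by
        ext r
        constructor
        · rintro ⟨y, rfl⟩
          refine ⟨F x (a⁻¹ • y), ⟨a⁻¹ • y, rfl⟩, ?_⟩
          simp only [hF, smul_eq_mul]
          have h1 : N y = |a| * N (a⁻¹ • y) := by
            rw [hsmul]
            rw [abs_inv]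
            field_simp
          have h2 : ‖a • x - (y : X)‖ = |a| * ‖x - ((a⁻¹ • y : Y) : X)‖ := by
            rw [← Real.norm_eq_abs, ← norm_smul]
            congr 1
            push_cast
            rw [smul_sub, smul_smul]
            field_simp
            rw [one_smul]
          rw [h1, h2]; ring
        · rintro ⟨r, ⟨y, rfl⟩, rfl⟩
          refine ⟨a • y, ?_⟩
          simp only [hF, smul_eq_mul]
          have h1 : N (a • y) = |a| * N y := hsmul a y
          have h2 : ‖a • x - ((a • y : Y) : X)‖ = |a| * ‖x - (y : X)‖ := by
            rw [← Real.norm_eq_abs, ← norm_smul]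
            congr 1
            push_cast
            rw [smul_sub]
          rw [h1, h2]; ring
      have hsm := Real.sInf_smul_of_nonneg (abs_nonneg a) (Set.range (F x))
      show sInf (Set.range (F (a • x))) = |a| * sInf (Set.range (F x))
      rw [hset, hsm, smul_eq_mul]
  · -- upper bound
    have : F x 0 = C * ‖x‖ := by simp [hF, hN0]
    exact this ▸ csInf_le (hbdd _) ⟨0, rfl⟩

set_option maxHeartbeats 2000000 in
/-- If a closed subspace `Y` of a real Banach space `X` admits an equivalent norm with a
Δ-point, then so does `X`; and the same holds for super Δ-points. -/
theorem renorming_deltaPoint_of_subspace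
    (X : Type*) [NormedAddCommGroup X] [NormedSpace ℝ X] [CompleteSpace X]
    (Y : Submodule ℝ X) (hY : IsClosed (Y : Set X)) :
    ((∃ N : Y → ℝ, IsEquivNorm Y N ∧ HasDeltaPointForNorm Y N) →
      (∃ N : X → ℝ, IsEquivNorm X N ∧ HasDeltaPointForNorm X N)) ∧
    ((∃ N : Y → ℝ, IsEquivNorm Y N ∧ HasSuperDeltaPointForNorm Y N) →
      (∃ N : X → ℝ, IsEquivNorm X N ∧ HasSuperDeltaPointForNorm X N)) := by
  constructor
  · rintro ⟨N, hN, z₀, hz₀, hΔ⟩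
    obtain ⟨N', hN', hres⟩ := extend_equiv_norm Y N hN
    obtain ⟨hadd', hsmul', c', C', hc', hC', hb'⟩ := hN'
    obtain ⟨hadd, hsmul, c, C, hc, hC, hb⟩ := hN
    have hz₀' : N' (z₀ : X) = 1 := (hres z₀).trans hz₀
    have hub : ∀ y : X, N' y ≤ 1 → N' ((z₀ : X) - y) ≤ 2 := by
      intro y hy
      have h1 : N' ((z₀ : X) - y) ≤ N' (z₀ : X) + N' (-y) := by
        have := hadd' (z₀ : X) (-y); simpa [sub_eq_add_neg] using this
      have h2 : N' (-y) = N' y := by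
        have := hsmul' (-1) y; simpa using this
      rw [h2] at h1; linarith
    refine ⟨N', ⟨hadd', hsmul', c', C', hc', hC', hb'⟩, (z₀ : X), hz₀', ?_⟩
    intro f hf ε hε hfz₀
    set T : Set ℝ := (fun y => N' ((z₀ : X) - y)) '' {y : X | N' y ≤ 1 ∧ 1 - ε < f y}
      with hT
    have hTub : ∀ r ∈ T, r ≤ 2 := by
      rintro r ⟨y, ⟨hy1, _⟩, rfl⟩; exact hub y hy1
    by_cases hA : 1 - ε < -(f (z₀ : X))
    · -- the slice contains -z₀
      have hmem : (-(z₀ : X)) ∈ {y : X | N' y ≤ 1 ∧ 1 - ε < f y} := by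
        constructor
        · have h2 : N' (-(z₀ : X)) = N' (z₀ : X) := by
            have := hsmul' (-1) (z₀ : X); simpa using this
          rw [h2, hz₀']
        · simpa using hA
      have hval : N' ((z₀ : X) - -(z₀ : X)) = 2 := by
        have h1 : (z₀ : X) - -(z₀ : X) = (2 : ℝ) • (z₀ : X) := by
          rw [two_smul]; abel
        rw [h1, hsmul' 2 (z₀ : X), hz₀']
        norm_num
      have h2T : (2:ℝ) ∈ T := ⟨-(z₀ : X), hmem, hval⟩
      exact le_antisymm (csSup_le ⟨2, h2T⟩ hTub) (le_csSup ⟨2, hTub⟩ h2T)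
    · push_neg at hA
      -- f z₀ > 0
      have hfz₀pos : 0 < f (z₀ : X) := by linarith
      set g₀ : Y →L[ℝ] ℝ := f.comp (Y.subtypeL) with hg₀
      have hg₀v : ∀ y : Y, g₀ y = f (y : X) := fun y => rfl
      set BY : Set Y := {y : Y | N y ≤ 1} with hBY
      have hBYne : BY.Nonempty := ⟨0, by simp [hBY, (by simpa using hsmul 0 0 : N 0 = 0)]⟩
      have hBYb : ∀ y : Y, y ∈ BY → g₀ y ≤ ‖f‖ / c := by
        intro y hy
        have h1 : c * ‖y‖ ≤ N y := (hb y).1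
        have h2 : ‖y‖ ≤ 1 / c := by
          rw [le_div_iff₀ hc]
          have := hy; simp only [hBY, Set.mem_setOf_eq] at this
          nlinarith
        calc g₀ y ≤ ‖g₀ y‖ := le_abs_self _
          _ ≤ ‖g₀‖ * ‖y‖ := g₀.le_opNorm y
          _ ≤ ‖f‖ * ‖y‖ := by
              have : ‖g₀‖ ≤ ‖f‖ * ‖Y.subtypeL‖ := f.opNorm_comp_le _
              have h3 : ‖Y.subtypeL‖ ≤ 1 := by
                refine ContinuousLinearMap.opNorm_le_bound _ zero_le_one ?_
                intro y; simp [Submodule.coe_norm]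
              calc ‖g₀‖ * ‖y‖ ≤ (‖f‖ * ‖Y.subtypeL‖) * ‖y‖ :=
                    mul_le_mul_of_nonneg_right this (norm_nonneg _)
                _ ≤ ‖f‖ * ‖y‖ := by
                    nlinarith [mul_nonneg (norm_nonneg f) (norm_nonneg y),
                      norm_nonneg (Y.subtypeL)]
          _ ≤ ‖f‖ * (1 / c) := mul_le_mul_of_nonneg_left h2 (norm_nonneg f)
          _ = ‖f‖ / c := by ring
      have hgbdd : BddAbove (g₀ '' BY) := ⟨‖f‖ / c, by rintro r ⟨y, hy, rfl⟩; exact hBYb y hy⟩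
      set s : ℝ := sSup (g₀ '' BY) with hs
      have hz₀BY : z₀ ∈ BY := by simp [hBY, hz₀]
      have hsge : f (z₀ : X) ≤ s := le_csSup hgbdd ⟨z₀, hz₀BY, rfl⟩
      have hspos : 0 < s := lt_of_lt_of_le hfz₀pos hsge
      set t : ℝ := max (1 - ε) 0 with ht
      have hts : t < s := max_lt (lt_of_lt_of_le hfz₀ hsge) hspos
      set δ : ℝ := 1 - t / s with hδ
      have hδpos : 0 < δ := by
        have : t / s < 1 := (div_lt_one hspos).mpr hts
        simp only [hδ]; linarith
      set g : Y →L[ℝ] ℝ := s⁻¹ • g₀ with hg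
      have hgv : ∀ y : Y, g y = g₀ y / s := fun y => inv_mul_eq_div _ _
      -- sup of g over BY is 1
      have hgsup : sSup (g '' BY) = 1 := by
        refine le_antisymm (csSup_le (hBYne.image g) ?_) ?_
        · rintro r ⟨y, hy, rfl⟩
          rw [hgv]
          have : g₀ y ≤ s := le_csSup hgbdd ⟨y, hy, rfl⟩
          rw [div_le_one hspos]; linarith
        · refine le_of_all_pos_add ?_
          intro η hη
          have hlt : s - s * η < sSup (g₀ '' BY) := by
            rw [← hs]; nlinarith
          obtain ⟨r, ⟨y, hy, rfl⟩, hr⟩ := exists_lt_of_lt_csSup (hBYne.image g₀) hlt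
          have hgy : 1 - η < g y := by
            rw [hgv]
            have h1 : (s - s * η) / s < g₀ y / s := (div_lt_div_iff_of_pos_right hspos).mpr hr
            have h2 : (s - s * η) / s = 1 - η := by rw [div_eq_iff (ne_of_gt hspos)]; ring
            linarith
          have hb1 : g y ≤ sSup (g '' BY) := le_csSup
            ⟨1, by rintro r ⟨y', hy', rfl⟩
                   rw [hgv, div_le_one hspos]
                   exact le_csSup hgbdd ⟨y', hy', rfl⟩⟩ ⟨y, hy, rfl⟩
          linarith
      have hgz₀ : 1 - δ < g z₀ := by
        have htf : t < f (z₀ : X) := max_lt hfz₀ hfz₀pos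
        have h1 : 1 - δ = t / s := by rw [hδ]; ring
        rw [h1, hgv, hg₀v]
        exact (div_lt_div_iff_of_pos_right hspos).mpr htf
      have := hΔ g hgsup δ hδpos hgz₀
      refine sSup_eq_two_of_subset ?_ this hTub
      rintro r ⟨y, ⟨hy1, hy2⟩, rfl⟩
      refine ⟨(y : X), ⟨?_, ?_⟩, ?_⟩
      · rw [hres]; exact hy1
      · have hty : t < g₀ y := by
          rw [hgv] at hy2
          have h1 : 1 - δ = t / s := by rw [hδ]; ring
          rw [h1] at hy2
          exact (div_lt_div_iff_of_pos_right hspos).mp hy2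
        have h2 : 1 - ε ≤ t := le_max_left _ _
        have h3 : g₀ y = f (y : X) := hg₀v y
        linarith
      · show N' ((z₀ : X) - (y : X)) = N (z₀ - y)
        rw [← hres (z₀ - y)]
        congr 1
  · rintro ⟨N, hN, z₀, hz₀, hΔ⟩
    obtain ⟨N', hN', hres⟩ := extend_equiv_norm Y N hN
    obtain ⟨hadd', hsmul', c', C', hc', hC', hb'⟩ := hN'
    have hz₀' : N' (z₀ : X) = 1 := (hres z₀).trans hz₀
    have hub : ∀ y : X, N' y ≤ 1 → N' ((z₀ : X) - y) ≤ 2 := by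
      intro y hy
      have h1 : N' ((z₀ : X) - y) ≤ N' (z₀ : X) + N' (-y) := by
        have := hadd' (z₀ : X) (-y); simpa [sub_eq_add_neg] using this
      have h2 : N' (-y) = N' y := by
        have := hsmul' (-1) y; simpa using this
      rw [h2] at h1; linarith
    refine ⟨N', ⟨hadd', hsmul', c', C', hc', hC', hb'⟩, (z₀ : X), hz₀', ?_⟩
    intro U hU hz₀U
    set U' : Set Y := (Subtype.val) ⁻¹' U with hU'
    have hopen : IsOpen (toWeakSpace ℝ Y '' U') := by
      have heq : toWeakSpace ℝ Y '' U' =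
          (WeakSpace.map (Y.subtypeL : Y →L[ℝ] X)) ⁻¹' (toWeakSpace ℝ X '' U) := by
        ext z
        constructor
        · rintro ⟨u, hu, rfl⟩
          exact ⟨(u : X), hu, rfl⟩
        · rintro ⟨u, hu, huz⟩
          have : (((toWeakSpace ℝ Y).symm z : Y) : X) = u := by
            exact ((toWeakSpace ℝ X).injective (by exact huz)).symm
          exact ⟨(toWeakSpace ℝ Y).symm z, by simp [hU', this, hu],
            by simp⟩
      rw [heq]
      exact (WeakSpace.map (Y.subtypeL : Y →L[ℝ] X)).continuous.isOpen_preimage _ hU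
    have hz₀U' : z₀ ∈ U' := hz₀U
    have := hΔ U' hopen hz₀U'
    refine sSup_eq_two_of_subset ?_ this ?_
    · rintro r ⟨y, ⟨hy1, hy2⟩, rfl⟩
      refine ⟨(y : X), ⟨?_, hy2⟩, ?_⟩
      · show N' ((y : Y) : X) ≤ 1
        rw [hres]; exact hy1
      · show N' ((z₀ : X) - (y : X)) = N (z₀ - y)
        rw [← hres (z₀ - y)]
        congr 1
    · rintro r ⟨y, ⟨hy1, _⟩, rfl⟩; exact hub y hy1
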